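/- arXiv:2406.16667 — 4 statements merged into one kernel-verified Lean document; each statement's English description precedes it below -/
import Mathlib

section
/- Let f ∈ L¹[a,b] be integrable and g be a positive, decreasing real function on [a,b]. Then there exists ξ ∈ [a,b] such that ∫_a^b f(x)g(x) dx = g(a) ∫_a^ξ f(x) dx. -/
/-!
Write `g(x) = ∫₀^{g(a)} 𝟙[t < g(x)] dt` and swap the integrals (layer cake):
`∫ₐᵇ f g = ∫₀^{g(a)} (∫_{a < x ≤ b, t < g(x)} f) dt`. Since `g` is decreasing, each level set
`{t < g}` meets `(a, b]` in an interval `(a, c]` up to an endpoint, so the inner integral is a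
value `F(c)` of the primitive `F(u) = ∫ₐᵘ f`. Hence `(∫ₐᵇ f g) / g(a)` is an average of values
of the continuous `F` on `[a, b]`, and it lies in the interval `F([a, b])`.
-/

open MeasureTheory Set

section LayerCake

variable {α : Type*} [MeasurableSpace α] {μ : Measure α} {f φ : α → ℝ}

lemma integrable_indicator_lt_prod (hf : Integrable f μ) (hφ : Measurable φ) (M : ℝ) :
    Integrable ({p : α × ℝ | p.2 < φ p.1}.indicator fun p => f p.1)
      (μ.prod (volume.restrict (Ioc 0 M))) :=
  (hf.comp_fst _).indicator (measurableSet_lt measurable_snd (hφ.comp measurable_fst))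

lemma integrableOn_setIntegral_lt [SFinite μ] (hf : Integrable f μ) (hφ : Measurable φ) (M : ℝ) :
    IntegrableOn (fun t => ∫ x in {x | t < φ x}, f x ∂μ) (Ioc 0 M) := by
  refine (integrable_indicator_lt_prod hf hφ M).integral_prod_right.congr (ae_of_all _ fun t => ?_)
  exact integral_indicator (hφ measurableSet_Ioi)

theorem integral_mul_eq_integral_Ioc_setIntegral_lt [SFinite μ] (hf : Integrable f μ)
    (hφ : Measurable φ) {M : ℝ} (hφM : ∀ᵐ x ∂μ, φ x ∈ Icc 0 M) :
    ∫ x, f x * φ x ∂μ = ∫ t in Ioc 0 M, ∫ x in {x | t < φ x}, f x ∂μ := by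
  have hslice : ∀ x, φ x ∈ Icc 0 M →
      ∫ t in Ioc 0 M, {p : α × ℝ | p.2 < φ p.1}.indicator (fun p => f p.1) (x, t) = f x * φ x := by
    rintro x ⟨h0, hM⟩
    have hIoc : Ioc 0 M ∩ Iio (φ x) = Ioo 0 (φ x) := by
      ext t; constructor
      · rintro ⟨⟨h1, -⟩, h2⟩; exact ⟨h1, h2⟩
      · rintro ⟨h1, h2⟩; exact ⟨⟨h1, h2.le.trans hM⟩, h2⟩
    change ∫ t in Ioc 0 M, (Iio (φ x)).indicator (fun _ => f x) t = f x * φ x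
    rw [integral_indicator measurableSet_Iio, Measure.restrict_restrict measurableSet_Iio,
      inter_comm, hIoc, setIntegral_const, Real.volume_real_Ioo_of_le h0, sub_zero, smul_eq_mul,
      mul_comm]
  calc ∫ x, f x * φ x ∂μ
      = ∫ x, (∫ t in Ioc 0 M, {p : α × ℝ | p.2 < φ p.1}.indicator (fun p => f p.1) (x, t)) ∂μ :=
        integral_congr_ae (hφM.mono fun x hx => (hslice x hx).symm)
    _ = ∫ t in Ioc 0 M, ∫ x, {p : α × ℝ | p.2 < φ p.1}.indicator (fun p => f p.1) (x, t) ∂μ :=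
        integral_integral_swap
          (f := fun x t => {p : α × ℝ | p.2 < φ p.1}.indicator (fun p => f p.1) (x, t))
          (integrable_indicator_lt_prod hf hφ M)
    _ = ∫ t in Ioc 0 M, ∫ x in {x | t < φ x}, f x ∂μ :=
        integral_congr_ae (ae_of_all _ fun t => integral_indicator (hφ measurableSet_Ioi))

end LayerCake

theorem IsLowerSet.exists_inter_Ioc_ae_eq_Ioc {α : Type*} [ConditionallyCompleteLinearOrder α]
    [MeasurableSpace α] [MeasurableSingletonClass α] {μ : Measure α} [NullSingletonClass μ]
    {s : Set α} (hs : IsLowerSet s) {a b : α} (hab : a ≤ b) :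
    ∃ c ∈ Icc a b, (s ∩ Ioc a b : Set α) =ᵐ[μ] Ioc a c := by
  set c := sSup (insert a (s ∩ Ioc a b) : Set α)
  have hbdd : BddAbove (insert a (s ∩ Ioc a b)) :=
    ⟨b, forall_mem_insert.2 ⟨hab, fun x hx => hx.2.2⟩⟩
  have hac : a ≤ c := le_csSup hbdd (mem_insert a _)
  have hcb : c ≤ b :=
    csSup_le (insert_nonempty _ _) (forall_mem_insert.2 ⟨hab, fun x hx => hx.2.2⟩)
  have hsub : s ∩ Ioc a b ⊆ Ioc a c := fun x hx =>
    ⟨hx.2.1, le_csSup hbdd (mem_insert_of_mem a hx)⟩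
  have hsup : Ioo a c ⊆ s ∩ Ioc a b := by
    rintro x ⟨hax, hxc⟩
    obtain ⟨y, hy, hxy⟩ := exists_lt_of_lt_csSup (insert_nonempty _ _) hxc
    rcases hy with rfl | ⟨hys, -, hyb⟩
    · exact absurd hxy hax.not_gt
    · exact ⟨hs hxy.le hys, hax, hxy.le.trans hyb⟩
  exact ⟨c, ⟨hac, hcb⟩, hsub.eventuallyLE.antisymm (Ioo_ae_eq_Ioc.symm.le.trans hsup.eventuallyLE)⟩

theorem Antitone.exists_setIntegral_lt_eq_intervalIntegral {G f : ℝ → ℝ} (hG : Antitone G)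
    {a b : ℝ} (hab : a ≤ b) (t : ℝ) :
    ∃ c ∈ Icc a b, ∫ x in {x | t < G x}, f x ∂volume.restrict (Ioc a b) = ∫ x in a..c, f x := by
  have hlower : IsLowerSet {x | t < G x} := fun x y hyx hx => lt_of_lt_of_le hx (hG hyx)
  obtain ⟨c, hc, hae⟩ := hlower.exists_inter_Ioc_ae_eq_Ioc (μ := volume) hab
  refine ⟨c, hc, ?_⟩
  rw [Measure.restrict_restrict (measurableSet_lt measurable_const hG.measurable),
    setIntegral_congr_set hae, intervalIntegral.integral_of_le hc.1]

theorem AntitoneOn.antitone_comp_projIcc {α β : Type*} [LinearOrder α] [Preorder β] {g : α → β}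
    {a b : α} (hg : AntitoneOn g (Icc a b)) (hab : a ≤ b) :
    Antitone fun x => g (projIcc a b hab x) := fun x y hxy =>
  hg (projIcc a b hab x).2 (projIcc a b hab y).2 (monotone_projIcc hab hxy)

theorem ContinuousOn.setAverage_mem_image_Icc {α : Type*} [MeasurableSpace α] {μ : Measure α}
    {s : Set α} {F : ℝ → ℝ} {J : α → ℝ} {a b : ℝ} (hab : a ≤ b) (hF : ContinuousOn F (Icc a b))
    (h0 : μ s ≠ 0) (hs : μ s ≠ ⊤) (hJ : ∀ᵐ x ∂μ.restrict s, J x ∈ F '' Icc a b)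
    (hJi : IntegrableOn J s μ) : ⨍ x in s, J x ∂μ ∈ F '' Icc a b := by
  have hconvex : Convex ℝ (F '' Icc a b) := by
    rw [hF.image_Icc hab]
    exact convex_Icc _ _
  exact hconvex.set_average_mem (isCompact_Icc.image_of_continuousOn hF).isClosed h0 hs hJ hJi

theorem bonnet_second_mean_value (a b : ℝ) (hab : a < b) (f g : ℝ → ℝ)
    (hf : IntervalIntegrable f MeasureTheory.volume a b)
    (hg_pos : ∀ x ∈ Set.Icc a b, 0 < g x)
    (hg_anti : AntitoneOn g (Set.Icc a b)) :
    ∃ ξ ∈ Set.Icc a b, ∫ x in a..b, f x * g x = g a * ∫ x in a..ξ, f x := by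
  have hga : 0 < g a := hg_pos a (left_mem_Icc.2 hab.le)
  set G : ℝ → ℝ := fun x => g (projIcc a b hab.le x)
  have hG : Antitone G := hg_anti.antitone_comp_projIcc hab.le
  have hG_mem : ∀ x, G x ∈ Icc 0 (g a) := fun x =>
    ⟨(hg_pos _ (projIcc a b hab.le x).2).le,
      hg_anti (left_mem_Icc.2 hab.le) (projIcc a b hab.le x).2 (projIcc a b hab.le x).2.1⟩
  have hlayer : ∫ x in a..b, f x * g x =
      ∫ t in Ioc 0 (g a), ∫ x in {x | t < G x}, f x ∂volume.restrict (Ioc a b) := by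
    rw [intervalIntegral.integral_of_le hab.le, ← integral_mul_eq_integral_Ioc_setIntegral_lt hf.1
      hG.measurable (ae_of_all _ hG_mem)]
    refine setIntegral_congr_fun measurableSet_Ioc fun x hx => ?_
    simp only [G, projIcc_of_mem hab.le (Ioc_subset_Icc_self hx)]
  have hF : ContinuousOn (fun u => ∫ x in a..u, f x) (Icc a b) := by
    simpa only [uIcc_of_le hab.le] using
      intervalIntegral.continuousOn_primitive_interval' hf left_mem_uIcc
  obtain ⟨ξ, hξ, hFξ⟩ := hF.setAverage_mem_image_Icc (μ := volume) (s := Ioc 0 (g a)) hab.le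
    (by simp [hga]) measure_Ioc_lt_top.ne
    (ae_of_all _ fun t => (hG.exists_setIntegral_lt_eq_intervalIntegral hab.le t).imp
      fun _ hc => ⟨hc.1, hc.2.symm⟩)
    (integrableOn_setIntegral_lt hf.1 hG.measurable _)
  refine ⟨ξ, hξ, ?_⟩
  rw [setAverage_eq, ← hlayer, Real.volume_real_Ioc_of_le hga.le, sub_zero, smul_eq_mul] at hFξ
  beta_reduce at hFξ
  rw [hFξ, mul_inv_cancel_left₀ hga.ne']
end

section
/- Let f and g be continuous real functions on [a,b], with f having a non-vanishing continuous derivative f', and suppose g(x)/f'(x) is positive and monotonic on [a,b]. Then |∫_a^b g(x) e^{i f(x)} dx| ≤ 2 · max_{a≤x≤b} g(x)/f'(x). -/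
/-!
Write `g e^{if} = (g / f') • (f' e^{if})`. The second factor has the primitive `-i e^{if}` of
modulus one, so its integral over any subinterval has norm at most `2`. Bonnet's form of the
second mean value theorem then bounds the integral by `2` times the largest value of the monotone
weight `g / f'`, attained at an endpoint. Bonnet's bound comes from the layer-cake formula
`u x = |(0, u x]|` and Fubini: for monotone `u`, each superlevel set `{x | s ≤ u x}` meets
`(A, B]` in a final segment `(c, B]` up to a null set.
-/

open MeasureTheory Set intervalIntegral

variable {E : Type*} [NormedAddCommGroup E] [NormedSpace ℝ E]

theorem setIntegral_Ioc_indicator_Iic [CompleteSpace E] {C D y : ℝ} (hCy : C ≤ y) (hyD : y ≤ D)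
    (v : E) : ∫ s in Ioc C D, (Iic y).indicator (fun _ => v) s = (y - C) • v := by
  rw [setIntegral_indicator measurableSet_Iic, Ioc_inter_Iic, min_eq_right hyD,
    setIntegral_const, Real.volume_real_Ioc_of_le hCy]

theorem Monotone.Ioc_inter_setOf_le_ae_eq {u : ℝ → ℝ} {A B s : ℝ} (hu : Monotone u)
    (hAB : A ≤ B) (hs : s ≤ u B) :
    ∃ c ∈ Icc A B, (Ioc A B ∩ {x | s ≤ u x} : Set ℝ) =ᵐ[volume] Ioc c B := by
  set T := Icc A B ∩ {x | s ≤ u x}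
  have hBT : B ∈ T := ⟨right_mem_Icc.2 hAB, hs⟩
  have hT : BddBelow T := ⟨A, fun x hx => hx.1.1⟩
  refine ⟨sInf T, ⟨le_csInf ⟨B, hBT⟩ fun x hx => hx.1.1, csInf_le hT hBT⟩, ?_⟩
  have hsub : Ioc A B ∩ {x | s ≤ u x} ⊆ Icc (sInf T) B :=
    fun x hx => ⟨csInf_le hT ⟨Ioc_subset_Icc_self hx.1, hx.2⟩, hx.1.2⟩
  have hsup : Ioc (sInf T) B ⊆ Ioc A B ∩ {x | s ≤ u x} := by
    intro x hx
    obtain ⟨y, hyT, hyx⟩ := exists_lt_of_csInf_lt ⟨B, hBT⟩ hx.1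
    exact ⟨⟨hyT.1.1.trans_lt hyx, hx.2⟩, hyT.2.trans (hu hyx.le)⟩
  exact (hsub.eventuallyLE.trans Ioc_ae_eq_Icc.symm.le).antisymm hsup.eventuallyLE

theorem Monotone.norm_integral_smul_le [CompleteSpace E] {u : ℝ → ℝ} {h : ℝ → E} {A B S : ℝ}
    (hAB : A ≤ B) (hu : Monotone u) (hA : 0 ≤ u A) (hh : IntervalIntegrable h volume A B)
    (hS : ∀ c ∈ Icc A B, ‖∫ x in c..B, h x‖ ≤ S) :
    ‖∫ x in A..B, u x • h x‖ ≤ S * u B := by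
  set F : ℝ → ℝ → E := fun x s => (Iic (u x)).indicator (fun _ => h x) s
  have hlayer : ∀ x ∈ Ioc A B, u x • h x = ∫ s in Ioc 0 (u B), F x s := fun x hx => by
    rw [setIntegral_Ioc_indicator_Iic (hA.trans (hu hx.1.le)) (hu hx.2), sub_zero]
  have hF : Integrable (Function.uncurry F)
      ((volume.restrict (Ioc A B)).prod (volume.restrict (Ioc 0 (u B)))) := by
    have hG : MeasurableSet {p : ℝ × ℝ | p.2 ≤ u p.1} :=
      measurableSet_le measurable_snd (hu.measurable.comp measurable_fst)
    exact ((hh.1.comp_fst _).indicator hG).congr (.of_forall fun p => rfl)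
  have hinner : ∀ s ∈ Ioc 0 (u B), ‖∫ x in Ioc A B, F x s‖ ≤ S := by
    intro s hs
    have hFs : (fun x => F x s) = {x | s ≤ u x}.indicator h := rfl
    obtain ⟨c, hc, hae⟩ := hu.Ioc_inter_setOf_le_ae_eq hAB hs.2
    rw [hFs, setIntegral_indicator (measurableSet_le measurable_const hu.measurable),
      setIntegral_congr_set hae, ← integral_of_le hc.2]
    exact hS c hc
  calc ‖∫ x in A..B, u x • h x‖
      = ‖∫ s in Ioc 0 (u B), ∫ x in Ioc A B, F x s‖ := by
        rw [integral_of_le hAB, setIntegral_congr_fun measurableSet_Ioc hlayer,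
          integral_integral_swap hF]
    _ ≤ S * volume.real (Ioc 0 (u B)) :=
        norm_setIntegral_le_of_norm_le_const measure_Ioc_lt_top hinner
    _ = S * u B := by rw [Real.volume_real_Ioc_of_le (hA.trans (hu hAB)), sub_zero]

theorem MonotoneOn.norm_integral_smul_le [CompleteSpace E] {u : ℝ → ℝ} {h : ℝ → E} {A B S : ℝ}
    (hAB : A ≤ B) (hu : MonotoneOn u (Icc A B)) (hA : 0 ≤ u A)
    (hh : IntervalIntegrable h volume A B) (hS : ∀ c ∈ Icc A B, ‖∫ x in c..B, h x‖ ≤ S) :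
    ‖∫ x in A..B, u x • h x‖ ≤ S * u B := by
  obtain ⟨v, hv, huv⟩ := hu.exists_monotone_extension
    (hu.map_isLeast (isLeast_Icc hAB)).bddBelow (hu.map_isGreatest (isGreatest_Icc hAB)).bddAbove
  rw [integral_congr fun x hx => by rw [huv (uIcc_of_le hAB ▸ hx)],
    huv (right_mem_Icc.2 hAB)]
  exact hv.norm_integral_smul_le hAB (huv (left_mem_Icc.2 hAB) ▸ hA) hh hS

theorem AntitoneOn.norm_integral_smul_le [CompleteSpace E] {u : ℝ → ℝ} {h : ℝ → E} {A B S : ℝ}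
    (hAB : A ≤ B) (hu : AntitoneOn u (Icc A B)) (hB : 0 ≤ u B)
    (hh : IntervalIntegrable h volume A B) (hS : ∀ c ∈ Icc A B, ‖∫ x in A..c, h x‖ ≤ S) :
    ‖∫ x in A..B, u x • h x‖ ≤ S * u A := by
  have hrefl : MapsTo (A + B - ·) (Icc A B) (Icc A B) :=
    fun x hx => ⟨by linarith [hx.2], by linarith [hx.1]⟩
  have hv : MonotoneOn (fun x => u (A + B - x)) (Icc A B) :=
    fun x hx y hy hxy => hu (hrefl hy) (hrefl hx) (by linarith)
  have hh' : IntervalIntegrable (fun x => h (A + B - x)) volume A B := by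
    simpa using (hh.comp_sub_left (A + B)).symm
  have hS' : ∀ c ∈ Icc A B, ‖∫ x in c..B, h (A + B - x)‖ ≤ S := fun c hc => by
    simpa [integral_comp_sub_left] using hS _ (hrefl hc)
  simpa [integral_comp_sub_left (fun x => u x • h x)] using
    hv.norm_integral_smul_le hAB (by simpa using hB) hh' hS'

open Complex in
theorem norm_integral_deriv_mul_cexp_I_le_two {f f' : ℝ → ℝ} {c d : ℝ}
    (hf : ∀ x ∈ uIcc c d, HasDerivAt f (f' x) x) (hf' : ContinuousOn f' (uIcc c d)) :
    ‖∫ x in c..d, (f' x : ℂ) * exp (I * f x)‖ ≤ 2 := by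
  have hprim : ∀ x ∈ uIcc c d,
      HasDerivAt (fun t => -I * exp (I * f t)) ((f' x : ℂ) * exp (I * f x)) x := fun x hx =>
    (((hf x hx).ofReal_comp.const_mul I).cexp.const_mul (-I)).congr_deriv <| by
      linear_combination (-exp (I * f x) * f' x) * I_sq
  have hfc : ContinuousOn f (uIcc c d) := fun x hx => (hf x hx).continuousAt.continuousWithinAt
  have hnorm : ∀ t : ℝ, ‖-I * exp (I * t)‖ = 1 := fun t => by
    rw [norm_mul, norm_neg, norm_I, one_mul, mul_comm, norm_exp_ofReal_mul_I]
  rw [integral_eq_sub_of_hasDerivAt hprim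
    (ContinuousOn.intervalIntegrable (by fun_prop))]
  calc _ ≤ ‖-I * exp (I * f d)‖ + ‖-I * exp (I * f c)‖ := norm_sub_le _ _
    _ = 2 := by rw [hnorm, hnorm]; norm_num

theorem first_derivative_test_general (a b : ℝ) (hab : a < b) (f f' g : ℝ → ℝ)
    (hf' : ContinuousOn f' (Set.Icc a b))
    (hderiv : ∀ x ∈ Set.Icc a b, HasDerivAt f (f' x) x)
    (hne : ∀ x ∈ Set.Icc a b, f' x ≠ 0)
    (hpos : ∀ x ∈ Set.Icc a b, 0 < g x / f' x)
    (hmono : MonotoneOn (fun x => g x / f' x) (Set.Icc a b) ∨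
      AntitoneOn (fun x => g x / f' x) (Set.Icc a b)) :
    ‖∫ x in a..b, (g x : ℂ) * Complex.exp (Complex.I * (f x : ℂ))‖ ≤
      2 * sSup ((fun x => g x / f' x) '' Set.Icc a b) := by
  set H : ℝ → ℂ := fun x => (f' x : ℂ) * Complex.exp (Complex.I * f x)
  have hH : ∀ c ∈ Icc a b, ∀ d ∈ Icc a b, ‖∫ x in c..d, H x‖ ≤ 2 := fun c hc d hd =>
    norm_integral_deriv_mul_cexp_I_le_two (fun x hx => hderiv x (uIcc_subset_Icc hc hd hx))
      (hf'.mono (uIcc_subset_Icc hc hd))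
  have hfc : ContinuousOn f (Icc a b) := fun x hx => (hderiv x hx).continuousAt.continuousWithinAt
  have hHint : IntervalIntegrable H volume a b :=
    ContinuousOn.intervalIntegrable_of_Icc hab.le (by fun_prop)
  have hfactor : ∫ x in a..b, (g x : ℂ) * Complex.exp (Complex.I * f x)
      = ∫ x in a..b, (g x / f' x) • H x := integral_congr fun x hx => by
    rw [uIcc_of_le hab.le] at hx
    simp only [H, Complex.real_smul, Complex.ofReal_div, ← mul_assoc,
      div_mul_cancel₀ _ (Complex.ofReal_ne_zero.2 (hne x hx))]
  have ha := left_mem_Icc.2 hab.le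
  have hb := right_mem_Icc.2 hab.le
  rw [hfactor]
  rcases hmono with hm | hm
  · rw [(hm.map_isGreatest (isGreatest_Icc hab.le)).csSup_eq]
    exact hm.norm_integral_smul_le hab.le (hpos a ha).le hHint fun c hc => hH c hc b hb
  · rw [(hm.map_isLeast (isLeast_Icc hab.le)).csSup_eq]
    exact hm.norm_integral_smul_le hab.le (hpos b hb).le hHint fun c hc => hH a ha c hc

theorem first_derivative_test (a b : ℝ) (hab : a < b) (f f' g : ℝ → ℝ)
    (hg : ContinuousOn g (Set.Icc a b))
    (hf' : ContinuousOn f' (Set.Icc a b))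
    (hderiv : ∀ x ∈ Set.Icc a b, HasDerivAt f (f' x) x)
    (hne : ∀ x ∈ Set.Icc a b, f' x ≠ 0)
    (hpos : ∀ x ∈ Set.Icc a b, 0 < g x / f' x)
    (hmono : MonotoneOn (fun x => g x / f' x) (Set.Icc a b) ∨
      AntitoneOn (fun x => g x / f' x) (Set.Icc a b)) :
    ‖∫ x in a..b, (g x : ℂ) * Complex.exp (Complex.I * (f x : ℂ))‖ ≤
      2 * sSup ((fun x => g x / f' x) '' Set.Icc a b) :=
  first_derivative_test_general a b hab f f' g hf' hderiv hne hpos hmono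
end

section
/- Let f : [a,b] → ℝ have a continuous derivative with 0 < f'(x) on [a,b] and let ν ≥ 1 be an integer. Then |∫_a^b f'(x) e^{2πi(f(x)+νx)} dx| ≤ f'(a)/(π(f'(a)+ν)), provided f' is decreasing. -/
/-!
Write the integrand as `w • (φ' e^{iφ})` with phase `φ = 2π(f + νx)` and weight `w = f'/φ'`,
which is nonnegative and decreasing. The partial integrals
`∫ₐˣ φ' e^{iφ} = i (e^{iφ(a)} - e^{iφ(x)})` have norm at most `2`, so the second mean value
theorem bounds the integral by
`2 w(a) = f'(a) / (π (f'(a) + ν))`. The second mean value theorem is proved by writing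
`w(x) = w(b) + ρ (x, b]` for the Stieltjes measure `ρ` of `-w` and exchanging the order of
integration (Abel summation).
-/

open MeasureTheory Set Complex Real

theorem AntitoneOn.exists_measureReal_Ioi_eq_sub {a b : ℝ} (hab : a ≤ b) {w : ℝ → ℝ}
    (hw : AntitoneOn w (Icc a b)) (hwc : ContinuousOn w (Icc a b)) :
    ∃ ρ : Measure ℝ, IsFiniteMeasure ρ ∧ (∀ᵐ t ∂ρ, t ∈ Ioc a b) ∧
      ∀ x ∈ Icc a b, ρ.real (Ioi x) = w x - w b := by
  let v := IccExtend hab ((Icc a b).domRestrict fun x => -w x)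
  have hv_mono : Monotone v := Monotone.IccExtend _ (monotoneOn_iff_monotone.1 hw.neg)
  have hv_cont : Continuous v := continuous_IccExtend_iff.2 hwc.neg.domRestrict
  let S : StieltjesFunction ℝ := ⟨v, hv_mono, fun x => hv_cont.continuousWithinAt⟩
  have hS : ∀ x ∈ Icc a b, S.measure (Ioc x b) = ENNReal.ofReal (w x - w b) := fun x hx => by
    rw [S.measure_Ioc]
    change ENNReal.ofReal (v b - v x) = _
    simp only [v, IccExtend_of_mem _ _ hx, IccExtend_right, domRestrict_apply, neg_sub_neg]
  refine ⟨S.measure.restrict (Ioc a b), ?_, ae_restrict_mem measurableSet_Ioc, fun x hx => ?_⟩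
  · exact isFiniteMeasure_restrict.2 (by simp [hS a (left_mem_Icc.2 hab)])
  · rw [measureReal_restrict_apply measurableSet_Ioi, inter_comm, Ioc_inter_Ioi,
      sup_eq_right.2 hx.1, measureReal_def, hS x hx,
      ENNReal.toReal_ofReal (sub_nonneg.2 (hw hx (right_mem_Icc.2 hab) hx.2))]

section

variable {E : Type*} [NormedAddCommGroup E] [NormedSpace ℝ E]

theorem MeasureTheory.Integrable.measureReal_Ioi_smul {μ : Measure ℝ} (ρ : Measure ℝ)
    [IsFiniteMeasure ρ] {G : ℝ → E} (hG : Integrable G μ) :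
    Integrable (fun x => ρ.real (Ioi x) • G x) μ := by
  have hanti : Antitone fun x => ρ.real (Ioi x) := fun x y hxy =>
    measureReal_mono (Ioi_subset_Ioi hxy)
  refine hG.bdd_smul (ρ.real univ) hanti.measurable.aestronglyMeasurable (.of_forall fun x => ?_)
  rw [Real.norm_of_nonneg measureReal_nonneg]
  exact measureReal_mono (subset_univ _)

theorem integral_measureReal_Ioi_smul [CompleteSpace E] {μ ρ : Measure ℝ} [SFinite μ]
    [IsFiniteMeasure ρ] {G : ℝ → E} (hG : Integrable G μ) :
    ∫ x, ρ.real (Ioi x) • G x ∂μ = ∫ t, ∫ x in Iio t, G x ∂μ ∂ρ := by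
  have hlt : MeasurableSet {p : ℝ × ℝ | p.1 < p.2} :=
    measurableSet_lt measurable_fst measurable_snd
  calc ∫ x, ρ.real (Ioi x) • G x ∂μ
      = ∫ x, ∫ t, (Ioi x).indicator (fun _ => G x) t ∂ρ ∂μ := by
        simp only [integral_indicator_const _ measurableSet_Ioi]
    _ = ∫ t, ∫ x, (Iio t).indicator G x ∂μ ∂ρ := by
        refine integral_integral_swap ?_
        exact ((hG.comp_fst ρ).indicator hlt).congr (.of_forall fun p => by
          simp [Function.uncurry, indicator_apply])
    _ = ∫ t, ∫ x in Iio t, G x ∂μ ∂ρ := by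
        simp only [integral_indicator measurableSet_Iio]

theorem norm_integral_smul_le_of_antitoneOn [CompleteSpace E] {a b M : ℝ} (hab : a ≤ b)
    {w : ℝ → ℝ} {G : ℝ → E}
    (hw : AntitoneOn w (Icc a b)) (hwc : ContinuousOn w (Icc a b)) (hwb : 0 ≤ w b)
    (hG : IntervalIntegrable G volume a b) (hM : ∀ x ∈ Icc a b, ‖∫ t in a..x, G t‖ ≤ M) :
    ‖∫ x in a..b, w x • G x‖ ≤ M * w a := by
  obtain ⟨ρ, hρ, hρ_supp, hρ_Ioi⟩ := hw.exists_measureReal_Ioi_eq_sub hab hwc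
  have hGi : IntegrableOn G (Ioc a b) :=
    (intervalIntegrable_iff_integrableOn_Ioc_of_le hab).1 hG
  have hsplit : ∫ x in a..b, w x • G x =
      w b • (∫ x in a..b, G x) + ∫ t, (∫ x in a..t, G x) ∂ρ := by
    have hpartial :
        ∀ᵐ t ∂ρ, ∫ x in Iio t, G x ∂volume.restrict (Ioc a b) = ∫ x in a..t, G x := by
      filter_upwards [hρ_supp] with t ht
      have : Iio t ∩ Ioc a b = Ioo a t := by
        ext x; simp only [mem_inter_iff, mem_Iio, mem_Ioc, mem_Ioo]; grind
      rw [Measure.restrict_restrict measurableSet_Iio, this,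
        intervalIntegral.integral_of_le ht.1.le, integral_Ioc_eq_integral_Ioo]
    have hwG : ∀ x ∈ Ioc a b, w x • G x = w b • G x + ρ.real (Ioi x) • G x := fun x hx => by
      rw [← add_smul, hρ_Ioi x (Ioc_subset_Icc_self hx), add_sub_cancel]
    rw [intervalIntegral.integral_of_le hab, intervalIntegral.integral_of_le hab,
      ← integral_congr_ae hpartial, ← integral_measureReal_Ioi_smul hGi, ← integral_smul,
      setIntegral_congr_fun measurableSet_Ioc hwG]
    exact integral_add (hGi.smul (w b)) (Integrable.measureReal_Ioi_smul ρ hGi)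
  have hmass : ρ.real univ = w a - w b := by
    rw [← hρ_Ioi a (left_mem_Icc.2 hab)]
    exact measureReal_congr (ae_eq_univ.2 (hρ_supp.mono fun t ht => ht.1)) |>.symm
  calc ‖∫ x in a..b, w x • G x‖
      ≤ ‖w b • (∫ x in a..b, G x)‖ + ‖∫ t, (∫ x in a..t, G x) ∂ρ‖ := by
        rw [hsplit]; exact norm_add_le _ _
    _ ≤ w b * M + M * ρ.real univ := by
        gcongr
        · rw [norm_smul, Real.norm_of_nonneg hwb]
          exact mul_le_mul_of_nonneg_left (hM b (right_mem_Icc.2 hab)) hwb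
        · exact norm_integral_le_of_norm_le_const
            (hρ_supp.mono fun t ht => hM t (Ioc_subset_Icc_self ht))
    _ = M * w a := by rw [hmass]; ring

end

theorem AntitoneOn.div_mul_add {s : Set ℝ} {g : ℝ → ℝ} {c ν : ℝ} (hg : AntitoneOn g s)
    (hc : 0 < c) (hν : 0 ≤ ν) (hpos : ∀ x ∈ s, 0 < g x) :
    AntitoneOn (fun x => g x / (c * (g x + ν))) s := fun x hx y hy hxy => by
  have hx' := hpos x hx
  have hy' := hpos y hy
  rw [div_le_div_iff₀ (by positivity) (by positivity)]
  nlinarith [mul_nonneg (mul_nonneg hc.le hν) (sub_nonneg.2 (hg hx hy hxy))]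

theorem norm_integral_deriv_mul_exp_mul_I_le_two {a b : ℝ} {φ φ' : ℝ → ℝ}
    (hφ : ∀ x ∈ uIcc a b, HasDerivAt φ (φ' x) x) (hφ' : IntervalIntegrable φ' volume a b) :
    ‖∫ x in a..b, (φ' x : ℂ) * exp (φ x * I)‖ ≤ 2 := by
  have hderiv : ∀ x ∈ uIcc a b,
      HasDerivAt (fun x => -I * exp (φ x * I)) ((φ' x : ℂ) * exp (φ x * I)) x := fun x hx => by
    refine ((((hφ x hx).ofReal_comp.mul_const I).cexp).const_mul (-I)).congr_deriv ?_
    ring_nf; rw [I_sq]; ring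
  have hcont : ContinuousOn (fun x => exp (φ x * I)) (uIcc a b) := fun x hx =>
    (((hφ x hx).ofReal_comp.mul_const I).cexp).continuousAt.continuousWithinAt
  have hφ'C : IntervalIntegrable (fun x => (φ' x : ℂ)) volume a b := ⟨hφ'.1.ofReal, hφ'.2.ofReal⟩
  rw [intervalIntegral.integral_eq_sub_of_hasDerivAt hderiv
    (hφ'C.mul_continuousOn hcont)]
  calc ‖-I * exp (φ b * I) - -I * exp (φ a * I)‖
      ≤ ‖-I * exp (φ b * I)‖ + ‖-I * exp (φ a * I)‖ := norm_sub_le _ _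
    _ = 2 := by simp only [norm_mul, norm_neg, norm_I, norm_exp_ofReal_mul_I]; norm_num

theorem weighted_exponential_integral_plus_general (a b : ℝ) (hab : a < b) (f f' : ℝ → ℝ)
    (hderiv : ∀ x ∈ Set.Icc a b, HasDerivAt f (f' x) x)
    (hcont : ContinuousOn f' (Set.Icc a b))
    (hpos : ∀ x ∈ Set.Icc a b, 0 < f' x)
    (hanti : AntitoneOn f' (Set.Icc a b))
    (ν : ℕ) :
    ‖∫ x in a..b, (f' x : ℂ) *
        Complex.exp (2 * Real.pi * Complex.I * ((f x + ν * x : ℝ) : ℂ))‖ ≤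
      f' a / (Real.pi * (f' a + ν)) := by
  set φ : ℝ → ℝ := fun x => 2 * π * (f x + ν * x)
  set φ' : ℝ → ℝ := fun x => 2 * π * (f' x + ν)
  have hφ'_pos : ∀ x ∈ Icc a b, 0 < φ' x := fun x hx => by have := hpos x hx; positivity
  have hφ : ∀ x ∈ Icc a b, HasDerivAt φ (φ' x) x := fun x hx =>
    (((hderiv x hx).add ((hasDerivAt_id x).const_mul (ν : ℝ))).const_mul (2 * π)).congr_deriv
      (by simp [φ'])
  have hφc : ContinuousOn φ (Icc a b) := fun x hx => (hφ x hx).continuousAt.continuousWithinAt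
  have hφ'c : ContinuousOn φ' (Icc a b) := by fun_prop
  have hintegrand : EqOn (fun x => (f' x : ℂ) * exp (2 * π * I * ((f x + ν * x : ℝ) : ℂ)))
      (fun x => (f' x / φ' x) • ((φ' x : ℂ) * exp (φ x * I))) (uIcc a b) := fun x hx => by
    rw [uIcc_of_le hab.le] at hx
    simp only [real_smul, ← mul_assoc, ← ofReal_mul, div_mul_cancel₀ _ (hφ'_pos x hx).ne']
    simp only [φ]; push_cast; ring_nf
  rw [intervalIntegral.integral_congr hintegrand]
  have hb : b ∈ Icc a b := right_mem_Icc.2 hab.le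
  have hG : ContinuousOn (fun x => (φ' x : ℂ) * exp (φ x * I)) (uIcc a b) := by
    rw [uIcc_of_le hab.le]; fun_prop
  calc _ ≤ 2 * (f' a / φ' a) := by
        refine norm_integral_smul_le_of_antitoneOn hab.le
          (hanti.div_mul_add two_pi_pos (Nat.cast_nonneg ν) hpos)
          (hcont.div hφ'c fun x hx => (hφ'_pos x hx).ne') (div_pos (hpos b hb) (hφ'_pos b hb)).le
          hG.intervalIntegrable fun x hx => ?_
        have hsub : uIcc a x ⊆ Icc a b := uIcc_subset_Icc (left_mem_Icc.2 hab.le) hx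
        exact norm_integral_deriv_mul_exp_mul_I_le_two (fun y hy => hφ y (hsub hy))
          (hφ'c.mono hsub).intervalIntegrable
    _ = f' a / (π * (f' a + ν)) := by simp only [φ']; field_simp

theorem weighted_exponential_integral_plus (a b : ℝ) (hab : a < b) (f f' : ℝ → ℝ)
    (hderiv : ∀ x ∈ Set.Icc a b, HasDerivAt f (f' x) x)
    (hcont : ContinuousOn f' (Set.Icc a b))
    (hpos : ∀ x ∈ Set.Icc a b, 0 < f' x)
    (hanti : AntitoneOn f' (Set.Icc a b))
    (ν : ℕ) (hν : 1 ≤ ν) :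
    ‖∫ x in a..b, (f' x : ℂ) *
        Complex.exp (2 * Real.pi * Complex.I * ((f x + ν * x : ℝ) : ℂ))‖ ≤
      f' a / (Real.pi * (f' a + ν)) :=
  weighted_exponential_integral_plus_general a b hab f f' hderiv hcont hpos hanti ν
end

section
/- Let f : [a,b] → ℝ have a continuous, positive, decreasing derivative f', and let ν be an integer with ν > f'(a). Then |∫_a^b f'(x) e^{2πi(f(x)−νx)} dx| ≤ f'(a)/(π(ν − f'(a))). -/
/-!
Write the integrand as `w • g` with `w = f' / (ν - f')` and `g = (ν - f') e(f(x) - νx)`, where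
`e(t) = exp(2πit)`. Up to sign, `g` is the derivative of `e(f(x) - νx) / 2πi`, so every partial
integral `∫_a^c g` has norm at most `1/π`; and `w` is nonnegative and decreasing because `f'` is.
Abel summation in integral form then bounds `‖∫_a^b w g‖` by `w(a)/π`: by the layer-cake formula
`w(x) = ∫_0^{w(a)} 1_{t ≤ w(x)} dt` and Fubini, the integral is an integral over `t` of integrals of
`g` over the superlevel sets `{w ≥ t}`, which are initial segments `(a, c]` up to a null set.
-/

open MeasureTheory Set

lemma exists_inter_isLowerSet_ae_eq_Ioc {μ : Measure ℝ} [NullSingletonClass μ] {a b : ℝ}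
    (hab : a ≤ b) {L : Set ℝ} (hL : IsLowerSet L) :
    ∃ c ∈ Icc a b, (Ioc a b ∩ L : Set ℝ) =ᵐ[μ] Ioc a c := by
  set S := Ioc a b ∩ L
  have hle : ∀ x ∈ insert a S, x ≤ b := by
    rintro x (rfl | hx)
    exacts [hab, hx.1.2]
  have hbdd : BddAbove (insert a S) := ⟨b, hle⟩
  set c := sSup (insert a S)
  have hS : S ⊆ Ioc a c := fun x hx => ⟨hx.1.1, le_csSup hbdd (Or.inr hx)⟩
  have hIoo : Ioo a c ⊆ S := by
    intro y hy
    obtain ⟨z, hz, hyz⟩ := exists_lt_of_lt_csSup (insert_nonempty a S) hy.2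
    rcases hz with rfl | hz
    · exact absurd hy.1 hyz.not_gt
    · exact ⟨⟨hy.1, hyz.le.trans hz.1.2⟩, hL hyz.le hz.2⟩
  exact ⟨c, ⟨le_csSup hbdd (mem_insert a S), csSup_le (insert_nonempty a S) hle⟩,
    hS.eventuallyLE.antisymm (Ioo_ae_eq_Ioc.symm.le.trans hIoo.eventuallyLE)⟩

section AbelSummation

variable {E : Type*} [NormedAddCommGroup E] [NormedSpace ℝ E] [CompleteSpace E]

lemma smul_eq_setIntegral_Ioc_indicator_Iic {s H : ℝ} (hs : 0 ≤ s) (hsH : s ≤ H) (v : E) :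
    s • v = ∫ t in Ioc 0 H, (Iic s).indicator (fun _ => v) t := by
  rw [setIntegral_indicator measurableSet_Iic, Ioc_inter_Iic, inf_eq_right.2 hsH,
    setIntegral_const, Real.volume_real_Ioc_of_le hs, sub_zero]

lemma norm_integral_smul_le_of_antitone {a b M : ℝ} (hab : a ≤ b) {h : ℝ → ℝ}
    (hh : Antitone h) (hb : 0 ≤ h b) {g : ℝ → E} (hg : IntervalIntegrable g volume a b)
    (hM : ∀ c ∈ Icc a b, ‖∫ x in a..c, g x‖ ≤ M) :
    ‖∫ x in a..b, h x • g x‖ ≤ M * h a := by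
  have hmeas : Measurable h := hh.measurable
  set F : ℝ → ℝ → E := fun x t => (Iic (h x)).indicator (fun _ => g x) t
  have layer_cake : ∀ x ∈ Ioc a b, h x • g x = ∫ t in Ioc 0 (h a), F x t := fun x hx =>
    smul_eq_setIntegral_Ioc_indicator_Iic (hb.trans (hh hx.2)) (hh hx.1.le) (g x)
  have hF : Integrable (Function.uncurry F)
      ((volume.restrict (Ioc a b)).prod (volume.restrict (Ioc 0 (h a)))) := by
    have : Function.uncurry F = {p : ℝ × ℝ | p.2 ≤ h p.1}.indicator (fun p => g p.1) := by
      ext ⟨x, t⟩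
      simp [F, indicator_apply]
    rw [this]
    exact (hg.1.comp_fst _).indicator
      (measurableSet_le measurable_snd (hmeas.comp measurable_fst))
  have superlevel_bound : ∀ t, ‖∫ x in Ioc a b, F x t‖ ≤ M := by
    intro t
    have : (fun x => F x t) = {x | t ≤ h x}.indicator g := by
      ext x
      simp [F, indicator_apply]
    rw [this, setIntegral_indicator (measurableSet_le measurable_const hmeas)]
    obtain ⟨c, hc, hae⟩ := exists_inter_isLowerSet_ae_eq_Ioc (μ := volume) hab
      (L := {x | t ≤ h x}) fun x y hyx hx => hx.trans (hh hyx)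
    rw [setIntegral_congr_set hae, ← intervalIntegral.integral_of_le hc.1]
    exact hM c hc
  calc ‖∫ x in a..b, h x • g x‖
      = ‖∫ t in Ioc 0 (h a), ∫ x in Ioc a b, F x t‖ := by
        rw [intervalIntegral.integral_of_le hab,
          setIntegral_congr_fun measurableSet_Ioc layer_cake, integral_integral_swap hF]
    _ ≤ M * volume.real (Ioc 0 (h a)) :=
        norm_setIntegral_le_of_norm_le_const measure_Ioc_lt_top fun t _ => superlevel_bound t
    _ = M * h a := by rw [Real.volume_real_Ioc_of_le (hb.trans (hh hab)), sub_zero]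

lemma norm_integral_smul_le_of_antitoneOn_s17 {a b M : ℝ} (hab : a ≤ b) {h : ℝ → ℝ}
    (hh : AntitoneOn h (Icc a b)) (hb : 0 ≤ h b) {g : ℝ → E} (hg : IntervalIntegrable g volume a b)
    (hM : ∀ c ∈ Icc a b, ‖∫ x in a..c, g x‖ ≤ M) :
    ‖∫ x in a..b, h x • g x‖ ≤ M * h a := by
  set h' : ℝ → ℝ := fun x => h (projIcc a b hab x)
  have hh' : Antitone h' := fun x y hxy =>
    hh (projIcc a b hab x).2 (projIcc a b hab y).2 (monotone_projIcc hab hxy)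
  have heq : ∀ x ∈ Icc a b, h' x = h x := fun x hx => by
    simp only [h', projIcc_of_mem hab hx]
  calc ‖∫ x in a..b, h x • g x‖ = ‖∫ x in a..b, h' x • g x‖ := by
        congr 1
        exact intervalIntegral.integral_congr fun x hx => by rw [heq x (uIcc_of_le hab ▸ hx)]
    _ ≤ M * h' a :=
        norm_integral_smul_le_of_antitone hab hh' (by rwa [heq b ⟨hab, le_rfl⟩]) hg hM
    _ = M * h a := by rw [heq a ⟨le_rfl, hab⟩]

end AbelSummation

open Complex Real

lemma intervalIntegrable_ofReal_mul_exp {φ φ' : ℝ → ℝ} {a c : ℝ}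
    (hφ : ContinuousOn φ (uIcc a c)) (hφ' : IntervalIntegrable φ' volume a c) :
    IntervalIntegrable (fun x => (φ' x : ℂ) * exp (2 * π * I * φ x)) volume a c :=
  IntervalIntegrable.mul_continuousOn ⟨hφ'.1.ofReal, hφ'.2.ofReal⟩
    (continuous_exp.comp_continuousOn
      (continuousOn_const.mul (continuous_ofReal.comp_continuousOn hφ)))

lemma norm_integral_deriv_mul_exp_le {φ φ' : ℝ → ℝ} {a c : ℝ}
    (hφ : ∀ x ∈ uIcc a c, HasDerivAt φ (φ' x) x) (hφ' : IntervalIntegrable φ' volume a c) :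
    ‖∫ x in a..c, (φ' x : ℂ) * exp (2 * π * I * φ x)‖ ≤ 1 / π := by
  set G : ℝ → ℂ := fun x => exp (2 * π * I * φ x) / (2 * π * I)
  have hG : ∀ x ∈ uIcc a c, HasDerivAt G ((φ' x : ℂ) * exp (2 * π * I * φ x)) x := by
    intro x hx
    have h2πI : (2 * π * I : ℂ) ≠ 0 := by simp [pi_ne_zero]
    refine (((hφ x hx).ofReal_comp.const_mul (2 * π * I)).cexp.div_const
      (2 * π * I)).congr_deriv ?_
    field_simp
  have hG_norm : ∀ y, ‖G y‖ = 1 / (2 * π) := fun y => by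
    simp [G, norm_exp, abs_of_pos pi_pos]
  have hint := intervalIntegrable_ofReal_mul_exp
    (fun x hx => (hφ x hx).continuousAt.continuousWithinAt) hφ'
  calc ‖∫ x in a..c, (φ' x : ℂ) * exp (2 * π * I * φ x)‖ = ‖G c - G a‖ := by
        rw [intervalIntegral.integral_eq_sub_of_hasDerivAt hG hint]
    _ ≤ ‖G c‖ + ‖G a‖ := norm_sub_le _ _
    _ = 1 / π := by
        rw [hG_norm, hG_norm]
        field_simp
        ring

theorem weighted_exponential_integral_minus (a b : ℝ) (hab : a < b) (f f' : ℝ → ℝ)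
    (hderiv : ∀ x ∈ Set.Icc a b, HasDerivAt f (f' x) x)
    (hcont : ContinuousOn f' (Set.Icc a b))
    (hpos : ∀ x ∈ Set.Icc a b, 0 < f' x)
    (hanti : StrictAntiOn f' (Set.Icc a b))
    (ν : ℤ) (hν : f' a < ν) :
    ‖∫ x in a..b, (f' x : ℂ) *
        Complex.exp (2 * Real.pi * Complex.I * ((f x - ν * x : ℝ) : ℂ))‖ ≤
      f' a / (Real.pi * (ν - f' a)) := by
  have hI : uIcc a b = Icc a b := uIcc_of_le hab.le
  have hf'_lt : ∀ x ∈ Icc a b, f' x < ν := fun x hx =>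
    (hanti.antitoneOn ⟨le_rfl, hab.le⟩ hx hx.1).trans_lt hν
  have hphase : ∀ x ∈ Icc a b, HasDerivAt (fun y => f y - ν * y) (f' x - ν) x := fun x hx =>
    ((hderiv x hx).sub ((hasDerivAt_id' x).const_mul (ν : ℝ))).congr_deriv (by rw [mul_one])
  set w : ℝ → ℝ := fun x => f' x / (ν - f' x)
  set g : ℝ → ℂ := fun x =>
    -(((f' x - ν : ℝ) : ℂ) * exp (2 * π * I * ((f x - ν * x : ℝ) : ℂ)))
  have hw : AntitoneOn w (Icc a b) := fun x hx y hy hxy => by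
    have := hanti.antitoneOn hx hy hxy
    have := hpos x hx
    have := hf'_lt x hx
    dsimp only [w]
    gcongr
  have hg_partial : ∀ c ∈ Icc a b, ‖∫ x in a..c, g x‖ ≤ 1 / π := fun c hc => by
    have hsub : uIcc a c ⊆ Icc a b := uIcc_of_le hc.1 ▸ Icc_subset_Icc_right hc.2
    rw [intervalIntegral.integral_neg, norm_neg]
    exact norm_integral_deriv_mul_exp_le (fun x hx => hphase x (hsub hx))
      ((hcont.mono hsub).sub continuousOn_const).intervalIntegrable
  have hg : IntervalIntegrable g volume a b :=
    (intervalIntegrable_ofReal_mul_exp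
      (fun x hx => (hphase x (hI ▸ hx)).continuousAt.continuousWithinAt)
      ((hcont.sub continuousOn_const).intervalIntegrable_of_Icc hab.le)).neg
  have hintegrand : ∀ x ∈ uIcc a b,
      (f' x : ℂ) * exp (2 * π * I * ((f x - ν * x : ℝ) : ℂ)) = w x • g x := by
    intro x hx
    have : ((ν - f' x : ℝ) : ℂ) ≠ 0 :=
      ofReal_ne_zero.2 (sub_pos.2 (hf'_lt x (hI ▸ hx))).ne'
    simp only [w, g, real_smul]
    push_cast at this ⊢
    field_simp
    ring
  have hw_b : 0 ≤ w b :=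
    div_nonneg (hpos b ⟨hab.le, le_rfl⟩).le (sub_pos.2 (hf'_lt b ⟨hab.le, le_rfl⟩)).le
  calc _ = ‖∫ x in a..b, w x • g x‖ := by rw [intervalIntegral.integral_congr hintegrand]
    _ ≤ 1 / π * w a := norm_integral_smul_le_of_antitoneOn_s17 hab.le hw hw_b hg hg_partial
    _ = f' a / (π * (ν - f' a)) := by
        have := sub_pos.2 hν
        simp only [w]
        field_simp
end
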